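/- Let p > 2 and let (w_n)_{n∈ℕ} be a sequence in (0,1]. Let 𝒫 = {(P₁,W₁), (P₂,W₂)} be the family of partition–weight pairs on ℕ where P₁ = {{n} : n ∈ ℕ} is the discrete partition with constant weight W₁ ≡ 1 and P₂ = {ℕ} is the indiscrete partition with weight W₂ = (w_n) (so that ‖a‖_𝒫 = max{(Σ_n |a_n|^p)^{1/p}, (Σ_n |a_n|² w_n²)^{1/2}} is the norm of Rosenthal's space X_{p,(w_n)}). Then the envelope norm generated by 𝒫 satisfies, for every a = (a_n) ∈ ℝ^ℕ: |||a||| = sup_{q⊆ℕ} (Σ_{n∈q} |a_n|^p + (Σ_{n∉q} |a_n|² w_n²)^{p/2})^{1/p}. -/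

import Mathlib

open scoped ENNReal
open MeasureTheory Filter

noncomputable section

variable {α : Type*}

/-- `P` is a partition of the type `α`: a collection of pairwise disjoint
nonempty subsets of `α` whose union is all of `α`. -/
def IsPartition (P : Set (Set α)) : Prop :=
  (∀ N ∈ P, N.Nonempty) ∧ P.PairwiseDisjoint id ∧ ⋃₀ P = Set.univ

/-- A weight function takes values in `(0,1]`. -/
def IsWeight (W : α → ℝ) : Prop := ∀ a, W a ∈ Set.Ioc (0 : ℝ) 1

/-- `‖x‖_{P,W} = (Σ_{N∈P} (Σ_{j∈N} x_j² w_j²)^{p/2})^{1/p}`, valued in `[0,∞]`. -/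
def pwNorm (p : ℝ) (P : Set (Set α)) (W : α → ℝ) (x : α → ℝ) : ℝ≥0∞ :=
  (∑' N : P, (∑' j : N.1, ENNReal.ofReal ((x j.1) ^ 2 * (W j.1) ^ 2)) ^ (p / 2)) ^ (1 / p)

/-- A partition–weight pair on `α`. -/
abbrev PWPair (α : Type*) := Set (Set α) × (α → ℝ)

/-- Every member of the family is a genuine partition–weight pair. -/
def IsPWFamily (𝒞 : Set (PWPair α)) : Prop :=
  ∀ PW ∈ 𝒞, IsPartition PW.1 ∧ IsWeight PW.2

/-- `‖x‖_𝒞 = sup_{(P,W) ∈ 𝒞} ‖x‖_{P,W}`. -/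
def famNorm (p : ℝ) (𝒞 : Set (PWPair α)) (x : α → ℝ) : ℝ≥0∞ :=
  ⨆ PW ∈ 𝒞, pwNorm p PW.1 PW.2 x

/-- The block of the partition `Q` containing `b` (for a genuine partition this is
the unique element of `Q` containing `b`). -/
def blockOf (Q : Set (Set α)) (b : α) : Set α := ⋃₀ {q ∈ Q | b ∈ q}

/-- The partition `P(Q,T)` obtained from a partition `Q` and a choice `T` of a
partition–weight pair for each block of `Q`. -/
def envPartition (Q : Set (Set α)) (T : Set α → PWPair α) : Set (Set α) :=
  {K | K.Nonempty ∧ ∃ q ∈ Q, ∃ s ∈ (T q).1, K = q ∩ s}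

/-- The weight `W(Q,T)`: on the block `q` of `Q` it is the weight chosen by `T q`. -/
def envWeight (Q : Set (Set α)) (T : Set α → PWPair α) : α → ℝ :=
  fun b => (T (blockOf Q b)).2 b

/-- A family of partition–weight pairs satisfies the envelope property if it is
closed under the operation `(Q, T) ↦ (P(Q,T), W(Q,T))`. -/
def EnvelopeProp (𝒞 : Set (PWPair α)) : Prop :=
  ∀ Q : Set (Set α), IsPartition Q → ∀ T : Set α → PWPair α, (∀ q ∈ Q, T q ∈ 𝒞) →
    (envPartition Q T, envWeight Q T) ∈ 𝒞

/-- The family `𝒞̃` of all pairs `(P(Q,T), W(Q,T))`. -/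
def envFam (𝒞 : Set (PWPair α)) : Set (PWPair α) :=
  {PW | ∃ Q T, IsPartition Q ∧ (∀ q ∈ Q, T q ∈ 𝒞) ∧
    PW = (envPartition Q T, envWeight Q T)}

/-- The envelope norm generated by `𝒞`. -/
def envNorm (p : ℝ) (𝒞 : Set (PWPair α)) (x : α → ℝ) : ℝ≥0∞ := famNorm p (envFam 𝒞) x

/-- The two partition–weight pairs defining Rosenthal's space `X_{p,(w_n)}`:
the discrete partition with weight `1` and the indiscrete partition with weight `w`. -/
def rosFam (w : ℕ → ℝ) : Set (PWPair ℕ) :=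
  {((Set.range fun n : ℕ => ({n} : Set ℕ)), fun _ => (1 : ℝ)),
   (({Set.univ} : Set (Set ℕ)), w)}

/-!
Under the envelope construction each block of `Q` either is shattered into singletons of
weight `1` (discrete pair) or stays whole with weight `w` (indiscrete pair). Writing `D` for the
points whose block is shattered, `|||a|||^p` is therefore a supremum of
`Σ_{n∈D} |a_n|^p + Σ_b (Σ_{j∈b} a_j² w_j²)^{p/2}` over partitions `{b}` of `Dᶜ`. Since
`t ↦ t^{p/2}` is superadditive for `p ≥ 2`, for fixed `D` the best such partition is `{Dᶜ}`
itself, which is realised by shattering exactly the points of `D`.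
-/

theorem ENNReal.tsum_rpow_le_rpow_tsum {ι : Type*} {r : ℝ} (hr : 1 ≤ r) (f : ι → ℝ≥0∞) :
    ∑' i, f i ^ r ≤ (∑' i, f i) ^ r := by
  set S := ∑' i, f i
  have hr0 : 0 ≤ r - 1 := by linarith
  have hpow : ∀ x : ℝ≥0∞, x ^ r = x ^ (r - 1) * x := fun x => by
    have h := ENNReal.rpow_add_of_nonneg (x := x) _ _ hr0 zero_le_one
    rwa [sub_add_cancel, ENNReal.rpow_one] at h
  calc ∑' i, f i ^ r = ∑' i, f i ^ (r - 1) * f i := by simp only [hpow]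
    _ ≤ ∑' i, S ^ (r - 1) * f i := by
      gcongr with i
      exact ENNReal.le_tsum i
    _ = S ^ r := by rw [ENNReal.tsum_mul_left, hpow]

theorem Set.singleton_ne_compl_of_mem {s : Set α} {a : α} (ha : a ∈ s) : {a} ≠ sᶜ :=
  fun h => (h ▸ Set.mem_singleton a : a ∈ sᶜ) ha

theorem IsPartition.blockOf_eq {Q : Set (Set α)} (hQ : IsPartition Q) {q : Set α} (hq : q ∈ Q)
    {b : α} (hb : b ∈ q) : blockOf Q b = q := by
  have : {s ∈ Q | b ∈ s} = {q} := by
    ext s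
    refine ⟨fun ⟨hs, hbs⟩ => ?_, fun hs => hs ▸ ⟨hq, hb⟩⟩
    by_contra hne
    exact Set.disjoint_left.mp (hQ.2.1 hs hq hne) hbs hb
  rw [blockOf, this, Set.sUnion_singleton]

theorem IsPartition.blockOf_mem_and_mem {Q : Set (Set α)} (hQ : IsPartition Q) (b : α) :
    blockOf Q b ∈ Q ∧ b ∈ blockOf Q b := by
  obtain ⟨q, hq, hbq⟩ : b ∈ ⋃₀ Q := hQ.2.2 ▸ Set.mem_univ b
  rw [hQ.blockOf_eq hq hbq]
  exact ⟨hq, hbq⟩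

def blockMass (W x : α → ℝ) (K : Set α) : ℝ≥0∞ :=
  ∑' j : K, ENNReal.ofReal (x j ^ 2 * W j ^ 2)

theorem pwNorm_eq_tsum_blockMass (p : ℝ) (P : Set (Set α)) (W x : α → ℝ) :
    pwNorm p P W x = (∑' K : P, blockMass W x K ^ (p / 2)) ^ (1 / p) := rfl

theorem blockMass_singleton (W x : α → ℝ) (b : α) :
    blockMass W x {b} = ENNReal.ofReal (x b ^ 2 * W b ^ 2) :=
  tsum_singleton b fun j => ENNReal.ofReal (x j ^ 2 * W j ^ 2)

theorem blockMass_empty (W x : α → ℝ) : blockMass W x ∅ = 0 :=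
  tsum_empty

theorem blockMass_congr {W W' x : α → ℝ} {K : Set α} (h : ∀ j ∈ K, W j = W' j) :
    blockMass W x K = blockMass W' x K :=
  tsum_congr fun j => by rw [h j j.2]

theorem ofReal_sq_rpow_half {p : ℝ} (hp : 0 ≤ p) (x : ℝ) :
    ENNReal.ofReal (x ^ 2) ^ (p / 2) = ENNReal.ofReal (|x| ^ p) := by
  rw [ENNReal.ofReal_rpow_of_nonneg (sq_nonneg x) (by positivity), ← sq_abs,
    ← Real.rpow_natCast, ← Real.rpow_mul (abs_nonneg x)]
  congr 2
  push_cast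
  ring

theorem blockMass_singleton_rpow_of_eq_one {p : ℝ} (hp : 0 ≤ p) {W : α → ℝ} (x : α → ℝ) {b : α}
    (hb : W b = 1) : blockMass W x {b} ^ (p / 2) = ENNReal.ofReal (|x b| ^ p) := by
  rw [blockMass_singleton, hb, one_pow, mul_one, ofReal_sq_rpow_half hp]

theorem tsum_blockMass_rpow_le {r : ℝ} (hr : 1 ≤ r) (W x : α → ℝ) {S : Set (Set α)}
    (hS : S.PairwiseDisjoint id) {u : Set α} (hSu : ∀ b ∈ S, b ⊆ u) :
    ∑' b : S, blockMass W x b ^ r ≤ blockMass W x u ^ r := by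
  refine (ENNReal.tsum_rpow_le_rpow_tsum hr _).trans (ENNReal.rpow_le_rpow ?_ (by linarith))
  set f := fun j => ENNReal.ofReal (x j ^ 2 * W j ^ 2)
  have hunion : ∑' j : ⋃ b ∈ S, b, f j = ∑' b : S, blockMass W x b :=
    ENNReal.tsum_biUnion' hS
  exact hunion ▸ ENNReal.tsum_mono_subtype f (Set.iUnion₂_subset hSu)

def discretePair : PWPair ℕ := (Set.range fun n : ℕ => ({n} : Set ℕ), fun _ => 1)

def indiscretePair (w : ℕ → ℝ) : PWPair ℕ := ({Set.univ}, w)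

theorem mem_rosFam {w : ℕ → ℝ} {PW : PWPair ℕ} :
    PW ∈ rosFam w ↔ PW = discretePair ∨ PW = indiscretePair w := Iff.rfl

theorem discretePair_ne_indiscretePair (w : ℕ → ℝ) : discretePair ≠ indiscretePair w := by
  intro h
  have h0 : ({0} : Set ℕ) ∈ (indiscretePair w).1 := h ▸ ⟨0, rfl⟩
  simpa using (Set.eq_univ_iff_forall.mp h0) 1

def discretePoints (Q : Set (Set ℕ)) (T : Set ℕ → PWPair ℕ) : Set ℕ :=
  {n | T (blockOf Q n) = discretePair}

abbrev wholeBlocks (w : ℕ → ℝ) (Q : Set (Set ℕ)) (T : Set ℕ → PWPair ℕ) : Set (Set ℕ) :=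
  {b | b ∈ Q ∧ T b = indiscretePair w}

section Envelope

variable {w : ℕ → ℝ} {Q : Set (Set ℕ)} {T : Set ℕ → PWPair ℕ}

theorem envWeight_of_mem_discretePoints {n : ℕ} (hn : n ∈ discretePoints Q T) :
    envWeight Q T n = 1 := by
  change (T (blockOf Q n)).2 n = 1
  rw [show T (blockOf Q n) = discretePair from hn]
  rfl

theorem envWeight_of_notMem_discretePoints (hQ : IsPartition Q)
    (hT : ∀ q ∈ Q, T q ∈ rosFam w) {n : ℕ} (hn : n ∉ discretePoints Q T) :
    envWeight Q T n = w n := by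
  change (T (blockOf Q n)).2 n = w n
  rw [(mem_rosFam.mp (hT _ (hQ.blockOf_mem_and_mem n).1)).resolve_left hn]
  rfl

theorem notMem_discretePoints_of_mem_wholeBlocks (hQ : IsPartition Q) {b : Set ℕ}
    (hb : b ∈ wholeBlocks w Q T) {n : ℕ} (hn : n ∈ b) : n ∉ discretePoints Q T := by
  intro hD
  change T (blockOf Q n) = discretePair at hD
  rw [hQ.blockOf_eq hb.1 hn, hb.2] at hD
  exact discretePair_ne_indiscretePair w hD.symm

theorem envPartition_eq (hQ : IsPartition Q) (hT : ∀ q ∈ Q, T q ∈ rosFam w) :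
    envPartition Q T =
      (fun n => {n}) '' discretePoints Q T ∪ wholeBlocks w Q T := by
  ext K
  constructor
  · rintro ⟨⟨m, hm⟩, q, hq, s, hs, rfl⟩
    rcases mem_rosFam.mp (hT q hq) with hTq | hTq
    · rw [hTq] at hs
      obtain ⟨n, rfl⟩ := hs
      obtain rfl : m = n := hm.2
      refine Or.inl ⟨m, ?_, (Set.inter_eq_right.mpr (Set.singleton_subset_iff.mpr hm.1)).symm⟩
      change T (blockOf Q m) = discretePair
      rw [hQ.blockOf_eq hq hm.1, hTq]
    · rw [hTq] at hs
      obtain rfl : s = Set.univ := hs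
      rw [Set.inter_univ]
      exact Or.inr ⟨hq, hTq⟩
  · rintro (⟨n, hn, rfl⟩ | ⟨hK, hTK⟩)
    · obtain ⟨hblock, hnblock⟩ := hQ.blockOf_mem_and_mem n
      refine ⟨Set.singleton_nonempty n, _, hblock, {n}, ?_,
        (Set.inter_eq_right.mpr (Set.singleton_subset_iff.mpr hnblock)).symm⟩
      rw [show T (blockOf Q n) = discretePair from hn]
      exact ⟨n, rfl⟩
    · refine ⟨hQ.1 K hK, K, hK, Set.univ, ?_, (Set.inter_univ K).symm⟩
      rw [hTK]
      rfl

theorem disjoint_image_singleton_wholeBlocks (hQ : IsPartition Q) :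
    Disjoint ((fun n => {n}) '' discretePoints Q T) (wholeBlocks w Q T) := by
  rw [Set.disjoint_left]
  rintro _ ⟨n, hn, rfl⟩ hnw
  exact notMem_discretePoints_of_mem_wholeBlocks hQ hnw rfl hn

theorem tsum_envPartition_rosFam {p : ℝ} (hp : 0 ≤ p) (hQ : IsPartition Q)
    (hT : ∀ q ∈ Q, T q ∈ rosFam w) (x : ℕ → ℝ) :
    ∑' K : envPartition Q T, blockMass (envWeight Q T) x K ^ (p / 2) =
      ∑' n : discretePoints Q T, ENNReal.ofReal (|x n| ^ p) +
        ∑' b : wholeBlocks w Q T, blockMass w x b ^ (p / 2) := by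
  rw [envPartition_eq hQ hT, ENNReal.summable.tsum_union_disjoint
      (f := fun K => blockMass (envWeight Q T) x K ^ (p / 2))
      (disjoint_image_singleton_wholeBlocks hQ) ENNReal.summable,
    tsum_image (fun K => blockMass (envWeight Q T) x K ^ (p / 2)) Set.singleton_injective.injOn]
  congr 1
  · exact tsum_congr fun n =>
      blockMass_singleton_rpow_of_eq_one hp x (envWeight_of_mem_discretePoints n.2)
  · refine tsum_congr fun b => ?_
    rw [blockMass_congr fun j hj => envWeight_of_notMem_discretePoints hQ hT
      (notMem_discretePoints_of_mem_wholeBlocks hQ b.2 hj)]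

theorem pwNorm_envPartition_rosFam_le {p : ℝ} (hp : 2 ≤ p) (hQ : IsPartition Q)
    (hT : ∀ q ∈ Q, T q ∈ rosFam w) (x : ℕ → ℝ) :
    pwNorm p (envPartition Q T) (envWeight Q T) x ≤
      (∑' n : discretePoints Q T, ENNReal.ofReal (|x n| ^ p) +
        blockMass w x (discretePoints Q T)ᶜ ^ (p / 2)) ^ (1 / p) := by
  rw [pwNorm_eq_tsum_blockMass, tsum_envPartition_rosFam (by linarith) hQ hT]
  gcongr
  exact tsum_blockMass_rpow_le (by linarith) w x (hQ.2.1.subset fun b hb => hb.1)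
    fun b hb n hn => notMem_discretePoints_of_mem_wholeBlocks hQ hb hn

end Envelope

section Split

variable (w : ℕ → ℝ) (D : Set ℕ)

def splitPartition : Set (Set ℕ) := (fun n => {n}) '' D ∪ ({Dᶜ} \ {∅})

def splitChoice : Set ℕ → PWPair ℕ := fun s => if s = Dᶜ then indiscretePair w else discretePair

theorem isPartition_splitPartition : IsPartition (splitPartition D) := by
  refine ⟨?_, ?_, ?_⟩
  · rintro _ (⟨n, -, rfl⟩ | ⟨-, hne⟩)
    exacts [Set.singleton_nonempty n, Set.nonempty_iff_ne_empty.mpr hne]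
  · rintro _ (⟨n, hn, rfl⟩ | ⟨rfl, -⟩) _ (⟨m, hm, rfl⟩ | ⟨rfl, -⟩) hne
    · exact Set.disjoint_singleton.mpr fun h => hne (h ▸ rfl)
    · exact Set.disjoint_singleton_left.mpr fun h => h hn
    · exact Set.disjoint_singleton_right.mpr fun h => h hm
    · exact absurd rfl hne
  · refine Set.eq_univ_of_forall fun n => ?_
    by_cases hn : n ∈ D
    · exact ⟨{n}, Or.inl ⟨n, hn, rfl⟩, rfl⟩
    · exact ⟨Dᶜ, Or.inr ⟨rfl, Set.nonempty_iff_ne_empty.mp ⟨n, hn⟩⟩, hn⟩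

theorem splitChoice_mem_rosFam (s : Set ℕ) : splitChoice w D s ∈ rosFam w := by
  unfold splitChoice
  split_ifs
  exacts [Or.inr rfl, Or.inl rfl]

theorem discretePoints_splitPartition :
    discretePoints (splitPartition D) (splitChoice w D) = D := by
  ext n
  change splitChoice w D (blockOf (splitPartition D) n) = discretePair ↔ n ∈ D
  by_cases hn : n ∈ D
  · rw [(isPartition_splitPartition D).blockOf_eq (Or.inl ⟨n, hn, rfl⟩) rfl, splitChoice,
      if_neg (Set.singleton_ne_compl_of_mem hn)]
    exact iff_of_true rfl hn
  · rw [(isPartition_splitPartition D).blockOf_eq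
      (Or.inr ⟨rfl, Set.nonempty_iff_ne_empty.mp ⟨n, hn⟩⟩) hn, splitChoice, if_pos rfl]
    exact iff_of_false (discretePair_ne_indiscretePair w).symm hn

theorem wholeBlocks_splitPartition :
    wholeBlocks w (splitPartition D) (splitChoice w D) = {Dᶜ} \ {∅} := by
  ext b
  constructor
  · rintro ⟨⟨n, hn, rfl⟩ | hb, hTb⟩
    · rw [splitChoice, if_neg (Set.singleton_ne_compl_of_mem hn)] at hTb
      exact absurd hTb (discretePair_ne_indiscretePair w)
    · exact hb
  · intro hb
    exact ⟨Or.inr hb, if_pos hb.1⟩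

theorem pwNorm_envPartition_splitPartition {p : ℝ} (hp : 0 < p) (x : ℕ → ℝ) :
    pwNorm p (envPartition (splitPartition D) (splitChoice w D))
        (envWeight (splitPartition D) (splitChoice w D)) x =
      (∑' n : D, ENNReal.ofReal (|x n| ^ p) + blockMass w x Dᶜ ^ (p / 2)) ^ (1 / p) := by
  rw [pwNorm_eq_tsum_blockMass, tsum_envPartition_rosFam hp.le (isPartition_splitPartition D)
      (fun s _ => splitChoice_mem_rosFam w D s),
    discretePoints_splitPartition, wholeBlocks_splitPartition]
  congr 2
  by_cases hD : Dᶜ = ∅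
  · rw [hD, Set.sdiff_self, tsum_empty, blockMass_empty, ENNReal.zero_rpow_of_pos (by positivity)]
  · rw [Set.sdiff_singleton_eq_self fun h => hD (Set.mem_singleton_iff.mp h).symm]
    exact tsum_singleton Dᶜ fun b => blockMass w x b ^ (p / 2)

end Split

theorem statement15_general (p : ℝ) (hp : 2 < p) (w : ℕ → ℝ) (a : ℕ → ℝ) :
    envNorm p (rosFam w) a =
      ⨆ q : Set ℕ,
        (∑' n : q, ENNReal.ofReal (|a n.1| ^ p) +
          (∑' n : ↥qᶜ, ENNReal.ofReal ((a n.1) ^ 2 * (w n.1) ^ 2)) ^ (p / 2)) ^ (1 / p) := by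
  apply le_antisymm
  · refine iSup₂_le ?_
    rintro _ ⟨Q, T, hQ, hT, rfl⟩
    exact (pwNorm_envPartition_rosFam_le hp.le hQ hT a).trans
      (le_iSup_of_le (discretePoints Q T) le_rfl)
  · refine iSup_le fun q => ?_
    have hsplit : (envPartition (splitPartition q) (splitChoice w q),
        envWeight (splitPartition q) (splitChoice w q)) ∈ envFam (rosFam w) :=
      ⟨_, _, isPartition_splitPartition q, fun s _ => splitChoice_mem_rosFam w q s, rfl⟩
    exact (pwNorm_envPartition_splitPartition w q (by linarith) a).symm.trans_le
      (le_iSup₂_of_le _ hsplit le_rfl)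

/-- The envelope norm generated by the two pairs defining Rosenthal's
space `X_{p,(w_n)}` is
`|||a||| = sup_{q ⊆ ℕ} (Σ_{n∈q} |a_n|^p + (Σ_{n∉q} a_n² w_n²)^{p/2})^{1/p}`. -/
theorem statement15 (p : ℝ) (hp : 2 < p) (w : ℕ → ℝ) (hw : IsWeight w) (a : ℕ → ℝ) :
    envNorm p (rosFam w) a =
      ⨆ q : Set ℕ,
        (∑' n : q, ENNReal.ofReal (|a n.1| ^ p) +
          (∑' n : ↥qᶜ, ENNReal.ofReal ((a n.1) ^ 2 * (w n.1) ^ 2)) ^ (p / 2)) ^ (1 / p) :=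
  statement15_general p hp w a
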